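/- Let K be a finite nonempty set of control states with distinguished start and halt states S, H ∈ K, D a set of data states, and M : K → K → Set (D × D) a code matrix. Let V : K → Set D be a vector of conditions invariant under M, i.e. for all j, i ∈ K, for all d ∈ V j and all d' with (d, d') ∈ M j i, we have d' ∈ V i. Define Step (k₀, d₀) (k₁, d₁) ↔ (d₀, d₁) ∈ M k₀ k₁. Then the code matrix is partially correct with respect to the precondition V S and postcondition V H: for any d ∈ V S and any d' ∈ D with Relation.ReflTransGen Step (S, d) (H, d'), we have d' ∈ V H. -/
import Mathlib


/-- One-step relation of a DSM with code matrix `M` on configurations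
`(k, d) : K × D`. -/
def dsmStep {K D : Type*} (M : K → K → Set (D × D)) : K × D → K × D → Prop :=
  fun c c' => (c.2, c'.2) ∈ M c.1 c'.1

theorem code_matrix_partial_correctness {K D : Type*} [Fintype K] [Nonempty K]
    (S H : K) (M : K → K → Set (D × D)) (V : K → Set D)
    (hV : ∀ j i : K, ∀ d ∈ V j, ∀ d' : D, (d, d') ∈ M j i → d' ∈ V i)
    (d : D) (hd : d ∈ V S) (d' : D)
    (h : Relation.ReflTransGen (dsmStep M) (S, d) (H, d')) :
    d' ∈ V H := by
  suffices hgen : ∀ c : K × D, Relation.ReflTransGen (dsmStep M) (S, d) c → c.2 ∈ V c.1 from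
    hgen (H, d') h
  intro c hc
  induction hc with
  | refl => exact hd
  | tail _ hstep ih => exact hV _ _ _ ih _ hstep
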